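/- Let g = 2k+1 be odd and h ∈ {1,2}, and write δ_h = (−1)^{h+1}. Then: (i) for 1 ≤ i ≤ k, ν_{i,k+1,h}(a_{k+1,h}) = −δ_h (a_{k+1,h}² − a_{i,h} a_{k+1,h}) a_{k+1,h} / A_2 · ∏_{ℓ≠i,k+1}(a_{k+1,h} − a_{ℓ,h})², and ν'_{i,k+1,h}(a_{k+1,h}) = −δ_h (2 a_{k+1,h}(a_{k+1,h} − a_{i,h})/A_2) ∏_{ℓ≠i,k+1}(a_{k+1,h} − a_{ℓ,h}) · (∏_{ℓ≠i,k+1}(a_{k+1,h} − a_{ℓ,h}) + a_{k+1,h} ∑_{m≠i,k+1} ∏_{ℓ≠i,k+1,m}(a_{k+1,h} − a_{ℓ,h})); (ii) for k+1 < j ≤ g−1, ν_{k+1,j,h}(a_{k+1,h}) = ∏_{ℓ≠j,k+1}(a_{k+1,h} − a_{ℓ,h})² · (a_{k+1,h} − a_{j,h}) a_{k+1,h} a_{j,h} / A_2², and ν'_{k+1,j,h}(a_{k+1,h}) = 2 ∏_{ℓ≠k+1,j}(a_{k+1,h} − a_{ℓ,h}) · ∑_{m≠k+1,j} ∏_{ℓ≠k+1,j,m}(a_{k+1,h}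 − a_{ℓ,h}) · (a_{k+1,h} − a_{j,h}) a_{k+1,h} a_{j,h} / A_2². All index ranges are over {1, …, g−1}. -/

import Mathlib

open Polynomial Finset

/-- `A_h = ∏_{i=1}^{g-1} a_{i,h}`. -/
noncomputable def Aprod (g : ℕ) (a : ℕ → ℕ → ℂ) (h : ℕ) : ℂ :=
  ∏ i ∈ Finset.Icc 1 (g - 1), a i h

/-- `d_2 = 1`, `d_1 = -A_1/A_2`. -/
noncomputable def dcoef (g : ℕ) (a : ℕ → ℕ → ℂ) (h : ℕ) : ℂ :=
  if h = 1 then -Aprod g a 1 / Aprod g a 2 else 1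

/-- The polynomial `α_{i,h}`: for `1 ≤ i ≤ k = ⌊g/2⌋`,
`α_{i,h}(t) = t·∏_{r≠i}(t − a_{r,h})`; for `k+1 ≤ i ≤ g−1`,
`α_{i,h}(t) = −(d_h a_{i,h}/A_h)·∏_{r≠i}(t − a_{r,h})`. -/
noncomputable def alphaPoly (g : ℕ) (a : ℕ → ℕ → ℂ) (i h : ℕ) : Polynomial ℂ :=
  if i ≤ g / 2 then
    X * ∏ r ∈ (Finset.Icc 1 (g - 1)).erase i, (X - C (a r h))
  else
    C (-(dcoef g a h * a i h / Aprod g a h)) *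
      ∏ r ∈ (Finset.Icc 1 (g - 1)).erase i, (X - C (a r h))

/-- Wronskian `ν_{ij,h} = α_{i,h} α'_{j,h} − α_{j,h} α'_{i,h}`. -/
noncomputable def nuPoly (g : ℕ) (a : ℕ → ℕ → ℂ) (i j h : ℕ) : Polynomial ℂ :=
  alphaPoly g a i h * derivative (alphaPoly g a j h)
    - alphaPoly g a j h * derivative (alphaPoly g a i h)

/-- Torsion values: for `1 ≤ m ≤ g` (with the convention `a_{g,h} = 0`),
`τ_{ij,m} = α'_{j,1}(a_{m,1})·α'_{i,2}(a_{m,2}) − α'_{i,1}(a_{m,1})·α'_{j,2}(a_{m,2})`;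
for `m = g+1`, `τ_{ij,g+1} = c_{j,1}c_{i,2} − c_{i,1}c_{j,2}` where `c_{i,h}` is the
coefficient of `t^{g-2}` in `α_{i,h}`. -/
noncomputable def tauVal (g : ℕ) (a : ℕ → ℕ → ℂ) (i j m : ℕ) : ℂ :=
  if m ≤ g then
    (derivative (alphaPoly g a j 1)).eval (if m = g then 0 else a m 1) *
        (derivative (alphaPoly g a i 2)).eval (if m = g then 0 else a m 2)
      - (derivative (alphaPoly g a i 1)).eval (if m = g then 0 else a m 1) *
        (derivative (alphaPoly g a j 2)).eval (if m = g then 0 else a m 2)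
  else
    (alphaPoly g a j 1).coeff (g - 2) * (alphaPoly g a i 2).coeff (g - 2)
      - (alphaPoly g a i 1).coeff (g - 2) * (alphaPoly g a j 2).coeff (g - 2)

/-- The `(5g−5) × ((g−1)(g−2)/2)` Gaussian matrix: the column indexed by the pair
`(i,j)`, `1 ≤ i < j ≤ g−1`, consists of the `2g−3` coefficients of `ν_{ij,1}`, the
`2g−3` coefficients of `ν_{ij,2}`, and then `τ_{ij,1}, …, τ_{ij,g+1}`. -/
noncomputable def gaussMatrix (g : ℕ) (a : ℕ → ℕ → ℂ) :
    Matrix (Fin (5 * g - 5))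
      {p : Fin g × Fin g // 1 ≤ (p.1 : ℕ) ∧ (p.1 : ℕ) < (p.2 : ℕ)} ℂ :=
  fun r p =>
    if (r : ℕ) < 2 * g - 3 then (nuPoly g a (p.1.1 : ℕ) (p.1.2 : ℕ) 1).coeff (r : ℕ)
    else if (r : ℕ) < 2 * (2 * g - 3) then
      (nuPoly g a (p.1.1 : ℕ) (p.1.2 : ℕ) 2).coeff ((r : ℕ) - (2 * g - 3))
    else tauVal g a (p.1.1 : ℕ) (p.1.2 : ℕ) ((r : ℕ) - 2 * (2 * g - 3) + 1)

/-- The parameters `a_{1,h}, …, a_{g−1,h}` (`h = 1,2`) are nonzero and pairwise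
distinct. -/
def validParams (g : ℕ) (a : ℕ → ℕ → ℂ) : Prop :=
  ∀ h, h = 1 ∨ h = 2 →
    (∀ i ∈ Finset.Icc 1 (g - 1), a i h ≠ 0) ∧
      ∀ i ∈ Finset.Icc 1 (g - 1), ∀ j ∈ Finset.Icc 1 (g - 1), i ≠ j → a i h ≠ a j h

/-!
Both `α_{i,h}` and `α_{j,h}` contain the factor `Q = ∏_{ℓ ≠ i,j} (t − a_{ℓ,h})`, and the
Wronskian satisfies `W(pQ, qQ) = Q² W(p, q)`. Hence at the node `t = a_{k+1,h}` the value of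
`ν` is `Q² W(p, q)` and its derivative is `2QQ'W(p, q) + Q²W'(p, q)`, where `p, q` are the
remaining factors of degree at most two. Since `d_1 / A_1 = −1 / A_2`, the constant
`−d_h a_{i,h} / A_h` equals `δ_h a_{i,h} / A_2` for both `h`, and `δ_h² = 1`.
-/

namespace Polynomial

section Wronskian

variable {R : Type*} [CommRing R]

theorem wronskian_mul_right_mul_right (p q r : R[X]) :
    wronskian (p * r) (q * r) = r ^ 2 * wronskian p q := by
  simp only [wronskian, derivative_mul]
  ring

theorem eval_derivative_sq_mul (r w : R[X]) (x : R) :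
    (derivative (r ^ 2 * w)).eval x =
      r.eval x * (2 * (derivative r).eval x * w.eval x + r.eval x * (derivative w).eval x) := by
  simp only [derivative_mul, derivative_sq, eval_add, eval_mul, eval_pow, eval_C]
  ring

variable {ι : Type*} [DecidableEq ι]

theorem eval_derivative_prod_X_sub_C (s : Finset ι) (b : ι → R) (x : R) :
    (derivative (∏ r ∈ s, (X - C (b r)))).eval x = ∑ m ∈ s, ∏ ℓ ∈ s.erase m, (x - b ℓ) := by
  simp [derivative_prod_finset, eval_finsetSum, eval_prod]

variable {s : Finset ι} {m n : ι}

theorem wronskian_mul_prod_erase (b : ι → R) (hm : m ∈ s) (hn : n ∈ s) (hmn : m ≠ n)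
    (p q : R[X]) :
    wronskian (p * ∏ r ∈ s.erase m, (X - C (b r))) (q * ∏ r ∈ s.erase n, (X - C (b r))) =
      (∏ r ∈ (s.erase m).erase n, (X - C (b r))) ^ 2 *
        wronskian (p * (X - C (b n))) (q * (X - C (b m))) := by
  rw [← mul_prod_erase _ _ (mem_erase.2 ⟨hmn.symm, hn⟩),
    ← mul_prod_erase (s.erase n) _ (mem_erase.2 ⟨hmn, hm⟩), erase_right_comm, ← mul_assoc,
    ← mul_assoc, wronskian_mul_right_mul_right]

theorem eval_wronskian_X_mul_prod_erase (b : ι → R) (hm : m ∈ s) (hn : n ∈ s) (hmn : m ≠ n)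
    (γ : R) :
    (wronskian (X * ∏ r ∈ s.erase m, (X - C (b r))) (C γ * ∏ r ∈ s.erase n, (X - C (b r)))).eval
        (b n) =
      -(γ * b n * (b n - b m)) * (∏ ℓ ∈ (s.erase m).erase n, (b n - b ℓ)) ^ 2 := by
  rw [wronskian_mul_prod_erase b hm hn hmn]
  simp only [wronskian, derivative_mul, derivative_sub, derivative_X, derivative_C, eval_mul,
    eval_sub, eval_add, eval_pow, eval_prod, eval_X, eval_C, eval_one, eval_zero]
  ring

theorem eval_derivative_wronskian_X_mul_prod_erase (b : ι → R) (hm : m ∈ s) (hn : n ∈ s)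
    (hmn : m ≠ n) (γ : R) :
    (derivative (wronskian (X * ∏ r ∈ s.erase m, (X - C (b r)))
        (C γ * ∏ r ∈ s.erase n, (X - C (b r))))).eval (b n) =
      -(2 * γ * (b n - b m)) * (∏ ℓ ∈ (s.erase m).erase n, (b n - b ℓ)) *
        ((∏ ℓ ∈ (s.erase m).erase n, (b n - b ℓ)) +
          b n * ∑ i ∈ (s.erase m).erase n, ∏ ℓ ∈ ((s.erase m).erase n).erase i, (b n - b ℓ)) := by
  rw [wronskian_mul_prod_erase b hm hn hmn, eval_derivative_sq_mul,
    eval_derivative_prod_X_sub_C]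
  simp only [wronskian, derivative_mul, derivative_add, derivative_sub, derivative_X,
    derivative_C, derivative_one, derivative_zero, eval_mul, eval_sub, eval_add, eval_prod,
    eval_X, eval_C, eval_one, eval_zero]
  ring

theorem eval_wronskian_C_mul_prod_erase (b : ι → R) (hm : m ∈ s) (hn : n ∈ s) (hmn : m ≠ n)
    (γ γ' : R) :
    (wronskian (C γ * ∏ r ∈ s.erase n, (X - C (b r))) (C γ' * ∏ r ∈ s.erase m, (X - C (b r)))).eval
        (b n) =
      γ * γ' * (b n - b m) * (∏ ℓ ∈ (s.erase m).erase n, (b n - b ℓ)) ^ 2 := by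
  rw [wronskian_mul_prod_erase b hn hm hmn.symm, erase_right_comm]
  simp only [wronskian, derivative_mul, derivative_sub, derivative_X, derivative_C, eval_mul,
    eval_sub, eval_add, eval_pow, eval_prod, eval_X, eval_C, eval_one, eval_zero]
  ring

theorem eval_derivative_wronskian_C_mul_prod_erase (b : ι → R) (hm : m ∈ s) (hn : n ∈ s)
    (hmn : m ≠ n) (γ γ' : R) :
    (derivative (wronskian (C γ * ∏ r ∈ s.erase n, (X - C (b r)))
        (C γ' * ∏ r ∈ s.erase m, (X - C (b r))))).eval (b n) =
      2 * γ * γ' * (b n - b m) * (∏ ℓ ∈ (s.erase n).erase m, (b n - b ℓ)) *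
        ∑ i ∈ (s.erase n).erase m, ∏ ℓ ∈ ((s.erase n).erase m).erase i, (b n - b ℓ) := by
  rw [wronskian_mul_prod_erase b hn hm hmn.symm, eval_derivative_sq_mul,
    eval_derivative_prod_X_sub_C]
  simp only [wronskian, derivative_mul, derivative_add, derivative_sub, derivative_X,
    derivative_C, derivative_one, derivative_zero, eval_mul, eval_sub, eval_add, eval_prod,
    eval_X, eval_C, eval_one, eval_zero]
  ring

end Wronskian

end Polynomial

theorem nuPoly_eq_wronskian (g : ℕ) (a : ℕ → ℕ → ℂ) (i j h : ℕ) :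
    nuPoly g a i j h = wronskian (alphaPoly g a i h) (alphaPoly g a j h) := by
  rw [nuPoly, wronskian, mul_comm (alphaPoly g a j h)]

theorem alphaPoly_of_le_half {g i : ℕ} (a : ℕ → ℕ → ℂ) (h : ℕ) (hi : i ≤ g / 2) :
    alphaPoly g a i h = X * ∏ r ∈ (Icc 1 (g - 1)).erase i, (X - C (a r h)) :=
  if_pos hi

theorem alphaPoly_of_half_lt {g i h : ℕ} {a : ℕ → ℕ → ℂ} (hh : h = 1 ∨ h = 2)
    (hA : Aprod g a 1 ≠ 0) (hi : g / 2 < i) :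
    alphaPoly g a i h =
      C ((-1) ^ (h + 1) * a i h / Aprod g a 2) * ∏ r ∈ (Icc 1 (g - 1)).erase i, (X - C (a r h)) := by
  rw [alphaPoly, if_neg hi.not_ge]
  rcases hh with rfl | rfl
  · rw [dcoef, if_pos rfl]
    congr 2
    field_simp
    ring
  · rw [dcoef, if_neg (by norm_num)]
    congr 2
    ring

theorem nuPoly_eval_at_node_odd_general (g k : ℕ) (hgk : g = 2 * k + 1)
    (a : ℕ → ℕ → ℂ) (ha : validParams g a) (h : ℕ) (hh : h = 1 ∨ h = 2) :
    (∀ i, 1 ≤ i → i ≤ k →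
      (nuPoly g a i (k + 1) h).eval (a (k + 1) h) =
        -((-1 : ℂ) ^ (h + 1)) * (a (k + 1) h ^ 2 - a i h * a (k + 1) h) *
            a (k + 1) h / Aprod g a 2 *
          ∏ ℓ ∈ ((Finset.Icc 1 (g - 1)).erase i).erase (k + 1),
            (a (k + 1) h - a ℓ h) ^ 2 ∧
      (derivative (nuPoly g a i (k + 1) h)).eval (a (k + 1) h) =
        -((-1 : ℂ) ^ (h + 1)) *
          (2 * a (k + 1) h * (a (k + 1) h - a i h) / Aprod g a 2) *
          (∏ ℓ ∈ ((Finset.Icc 1 (g - 1)).erase i).erase (k + 1),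
            (a (k + 1) h - a ℓ h)) *
          ((∏ ℓ ∈ ((Finset.Icc 1 (g - 1)).erase i).erase (k + 1),
              (a (k + 1) h - a ℓ h)) +
            a (k + 1) h * ∑ m ∈ ((Finset.Icc 1 (g - 1)).erase i).erase (k + 1),
              ∏ ℓ ∈ (((Finset.Icc 1 (g - 1)).erase i).erase (k + 1)).erase m,
                (a (k + 1) h - a ℓ h))) ∧
    (∀ j, k + 1 < j → j ≤ g - 1 →
      (nuPoly g a (k + 1) j h).eval (a (k + 1) h) =
        (∏ ℓ ∈ ((Finset.Icc 1 (g - 1)).erase j).erase (k + 1),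
            (a (k + 1) h - a ℓ h) ^ 2) *
          ((a (k + 1) h - a j h) * a (k + 1) h * a j h / (Aprod g a 2) ^ 2) ∧
      (derivative (nuPoly g a (k + 1) j h)).eval (a (k + 1) h) =
        2 * (∏ ℓ ∈ ((Finset.Icc 1 (g - 1)).erase (k + 1)).erase j,
            (a (k + 1) h - a ℓ h)) *
          (∑ m ∈ ((Finset.Icc 1 (g - 1)).erase (k + 1)).erase j,
            ∏ ℓ ∈ (((Finset.Icc 1 (g - 1)).erase (k + 1)).erase j).erase m,
              (a (k + 1) h - a ℓ h)) *
          ((a (k + 1) h - a j h) * a (k + 1) h * a j h / (Aprod g a 2) ^ 2)) := by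
  have hA : Aprod g a 1 ≠ 0 := prod_ne_zero_iff.mpr (ha 1 (Or.inl rfl)).1
  have hsign : ∀ x y : ℂ, (-1) ^ (h + 1) * x / Aprod g a 2 * ((-1) ^ (h + 1) * y / Aprod g a 2) =
      x * y / Aprod g a 2 ^ 2 := fun x y => by
    rw [div_mul_div_comm, mul_mul_mul_comm, ← pow_add, Even.neg_one_pow ⟨h + 1, rfl⟩, one_mul, sq]
  have hnode : g / 2 < k + 1 := by omega
  refine ⟨fun i hi hik => ?_, fun j hj hjg => ?_⟩
  · have hiS : i ∈ Icc 1 (g - 1) := mem_Icc.2 ⟨hi, by omega⟩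
    have hnS : k + 1 ∈ Icc 1 (g - 1) := mem_Icc.2 ⟨by omega, by omega⟩
    rw [nuPoly_eq_wronskian, alphaPoly_of_le_half a h (by omega), alphaPoly_of_half_lt hh hA hnode]
    constructor
    · rw [eval_wronskian_X_mul_prod_erase (a · h) hiS hnS (by omega), ← prod_pow]
      ring
    · rw [eval_derivative_wronskian_X_mul_prod_erase (a · h) hiS hnS (by omega)]
      ring
  · have hjS : j ∈ Icc 1 (g - 1) := mem_Icc.2 ⟨by omega, hjg⟩
    have hnS : k + 1 ∈ Icc 1 (g - 1) := mem_Icc.2 ⟨by omega, by omega⟩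
    rw [nuPoly_eq_wronskian, alphaPoly_of_half_lt hh hA hnode,
      alphaPoly_of_half_lt hh hA (by omega : g / 2 < j)]
    constructor
    · rw [eval_wronskian_C_mul_prod_erase (a · h) hjS hnS (by omega), hsign, prod_pow]
      ring
    · rw [eval_derivative_wronskian_C_mul_prod_erase (a · h) hjS hnS (by omega), mul_assoc 2,
        hsign]
      ring

/-- Let `g = 2k+1` be odd, `h ∈ {1,2}`, `δ_h = (−1)^{h+1}`.
(i) For `1 ≤ i ≤ k`:
`ν_{i,k+1,h}(a_{k+1,h}) = −δ_h(a_{k+1,h}² − a_{i,h}a_{k+1,h})a_{k+1,h}/A_2 ·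
∏_{ℓ≠i,k+1}(a_{k+1,h} − a_{ℓ,h})²` and
`ν'_{i,k+1,h}(a_{k+1,h}) = −δ_h(2a_{k+1,h}(a_{k+1,h} − a_{i,h})/A_2)∏_{ℓ≠i,k+1}(a_{k+1,h} − a_{ℓ,h})
· (∏_{ℓ≠i,k+1}(a_{k+1,h} − a_{ℓ,h}) + a_{k+1,h}∑_{m≠i,k+1}∏_{ℓ≠i,k+1,m}(a_{k+1,h} − a_{ℓ,h}))`.
(ii) For `k+1 < j ≤ g−1`:
`ν_{k+1,j,h}(a_{k+1,h}) = ∏_{ℓ≠j,k+1}(a_{k+1,h} − a_{ℓ,h})² · (a_{k+1,h} − a_{j,h})a_{k+1,h}a_{j,h}/A_2²` and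
`ν'_{k+1,j,h}(a_{k+1,h}) = 2∏_{ℓ≠k+1,j}(a_{k+1,h} − a_{ℓ,h}) ·
∑_{m≠k+1,j}∏_{ℓ≠k+1,j,m}(a_{k+1,h} − a_{ℓ,h}) · (a_{k+1,h} − a_{j,h})a_{k+1,h}a_{j,h}/A_2²`. -/
theorem nuPoly_eval_at_node_odd (g k : ℕ) (hgk : g = 2 * k + 1) (hg : 3 ≤ g)
    (a : ℕ → ℕ → ℂ) (ha : validParams g a) (h : ℕ) (hh : h = 1 ∨ h = 2) :
    (∀ i, 1 ≤ i → i ≤ k →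
      (nuPoly g a i (k + 1) h).eval (a (k + 1) h) =
        -((-1 : ℂ) ^ (h + 1)) * (a (k + 1) h ^ 2 - a i h * a (k + 1) h) *
            a (k + 1) h / Aprod g a 2 *
          ∏ ℓ ∈ ((Finset.Icc 1 (g - 1)).erase i).erase (k + 1),
            (a (k + 1) h - a ℓ h) ^ 2 ∧
      (derivative (nuPoly g a i (k + 1) h)).eval (a (k + 1) h) =
        -((-1 : ℂ) ^ (h + 1)) *
          (2 * a (k + 1) h * (a (k + 1) h - a i h) / Aprod g a 2) *
          (∏ ℓ ∈ ((Finset.Icc 1 (g - 1)).erase i).erase (k + 1),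
            (a (k + 1) h - a ℓ h)) *
          ((∏ ℓ ∈ ((Finset.Icc 1 (g - 1)).erase i).erase (k + 1),
              (a (k + 1) h - a ℓ h)) +
            a (k + 1) h * ∑ m ∈ ((Finset.Icc 1 (g - 1)).erase i).erase (k + 1),
              ∏ ℓ ∈ (((Finset.Icc 1 (g - 1)).erase i).erase (k + 1)).erase m,
                (a (k + 1) h - a ℓ h))) ∧
    (∀ j, k + 1 < j → j ≤ g - 1 →
      (nuPoly g a (k + 1) j h).eval (a (k + 1) h) =
        (∏ ℓ ∈ ((Finset.Icc 1 (g - 1)).erase j).erase (k + 1),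
            (a (k + 1) h - a ℓ h) ^ 2) *
          ((a (k + 1) h - a j h) * a (k + 1) h * a j h / (Aprod g a 2) ^ 2) ∧
      (derivative (nuPoly g a (k + 1) j h)).eval (a (k + 1) h) =
        2 * (∏ ℓ ∈ ((Finset.Icc 1 (g - 1)).erase (k + 1)).erase j,
            (a (k + 1) h - a ℓ h)) *
          (∑ m ∈ ((Finset.Icc 1 (g - 1)).erase (k + 1)).erase j,
            ∏ ℓ ∈ (((Finset.Icc 1 (g - 1)).erase (k + 1)).erase j).erase m,
              (a (k + 1) h - a ℓ h)) *
          ((a (k + 1) h - a j h) * a (k + 1) h * a j h / (Aprod g a 2) ^ 2)) :=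
  nuPoly_eval_at_node_odd_general g k hgk a ha h hh
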